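/- arXiv:0911.2229 — 3 statements merged into one kernel-verified Lean document; each statement's English description precedes it below -/
import Mathlib

section
/- Let θ > 0 and λ ∈ ℝ. Suppose η : ℝ × ℝ → ℝ is twice continuously differentiable and satisfies the free backward heat equation θ² ∂η/∂t (t,q) = -(θ⁴/2) ∂²η/∂q² (t,q) for all (t,q) ∈ ℝ × ℝ. Define η^V(t,q) = exp(-λ² t³/(6θ²)) · exp(λ t q/θ²) · η(t, q - λ t²/2). Then η^V satisfies the backward heat equation with linear potential V(q) = λq, namely θ² ∂η^V/∂t (t,q) = -(θ⁴/2) ∂²η^V/∂q² (t,q) + λ q · η^V(t,q) for all (t,q) ∈ ℝ × ℝ. -/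
/-- Partial derivative in the first (time) variable of a function of two real variables. -/
noncomputable def partialT (f : ℝ × ℝ → ℝ) (t q : ℝ) : ℝ :=
  deriv (fun s => f (s, q)) t

/-- Partial derivative in the second (space) variable of a function of two real variables. -/
noncomputable def partialQ (f : ℝ × ℝ → ℝ) (t q : ℝ) : ℝ :=
  deriv (fun r => f (t, r)) q

/-- Second partial derivative in the second (space) variable. -/
noncomputable def partialQQ (f : ℝ × ℝ → ℝ) (t q : ℝ) : ℝ :=
  deriv (fun r => partialQ f t r) q

/-!
Conjugating by the gauge factor `exp (A t + B t q)` and shifting `q` by `h t` turn the free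
operator `θ² ∂ₜ + (θ⁴/2) ∂²_q` into itself plus first- and zeroth-order terms. For
`B t = λ t / θ²` and `h t = λ t² / 2` the first-order terms `± θ² λ t ∂_q` cancel, and the choice
`A t = -λ² t³ / (6 θ²)` leaves exactly the potential term `λ q`.
-/

open Real

variable {f g : ℝ × ℝ → ℝ} {t q : ℝ}

theorem partialT_eq_fderiv (hf : DifferentiableAt ℝ f (t, q)) :
    partialT f t q = fderiv ℝ f (t, q) (1, 0) :=
  (hf.hasFDerivAt.comp_hasDerivAt t ((hasDerivAt_id t).prodMk (hasDerivAt_const t q))).deriv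

theorem partialQ_eq_fderiv (hf : DifferentiableAt ℝ f (t, q)) :
    partialQ f t q = fderiv ℝ f (t, q) (0, 1) :=
  (hf.hasFDerivAt.comp_hasDerivAt q ((hasDerivAt_const q t).prodMk (hasDerivAt_id q))).deriv

theorem fderiv_apply_eq_partialT_add_partialQ (hf : DifferentiableAt ℝ f (t, q)) (v : ℝ × ℝ) :
    fderiv ℝ f (t, q) v = v.1 * partialT f t q + v.2 * partialQ f t q := by
  have hv : v = v.1 • ((1 : ℝ), (0 : ℝ)) + v.2 • ((0 : ℝ), (1 : ℝ)) := by simp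
  rw [partialT_eq_fderiv hf, partialQ_eq_fderiv hf]
  conv_lhs => rw [hv, map_add, map_smul, map_smul]
  rfl

theorem differentiable_partialQ (hf : ContDiff ℝ 2 f) (t : ℝ) :
    Differentiable ℝ (fun r => partialQ f t r) := by
  have hfd : Differentiable ℝ f := hf.differentiable two_ne_zero
  have hf' : Differentiable ℝ (fderiv ℝ f) :=
    (hf.fderiv_right (by norm_num)).differentiable one_ne_zero
  simp_rw [fun r => partialQ_eq_fderiv (hfd (t, r))]
  fun_prop

section Shift

variable {h : ℝ → ℝ}

theorem partialQ_comp_shift :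
    partialQ (fun p => f (p.1, p.2 - h p.1)) t q = partialQ f t (q - h t) :=
  deriv_comp_sub_const (fun r => f (t, r)) (h t) q

theorem partialQQ_comp_shift :
    partialQQ (fun p => f (p.1, p.2 - h p.1)) t q = partialQQ f t (q - h t) := by
  simp only [partialQQ, partialQ_comp_shift]
  exact deriv_comp_sub_const (fun r => partialQ f t r) (h t) q

theorem partialT_comp_shift {h' : ℝ} (hf : DifferentiableAt ℝ f (t, q - h t))
    (hh : HasDerivAt h h' t) :
    partialT (fun p => f (p.1, p.2 - h p.1)) t q =
      partialT f t (q - h t) - h' * partialQ f t (q - h t) := by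
  have hcurve : HasDerivAt (fun s => (s, q - h s)) ((1 : ℝ), -h') t :=
    (hasDerivAt_id t).prodMk (hh.const_sub q)
  have hslice : HasDerivAt (fun s => f (s, q - h s)) (fderiv ℝ f (t, q - h t) (1, -h')) t :=
    hf.hasFDerivAt.comp_hasDerivAt t hcurve
  rw [partialT, hslice.deriv, fderiv_apply_eq_partialT_add_partialQ hf]
  ring

end Shift

section Gauge

variable {A B : ℝ → ℝ}

theorem hasDerivAt_exp_affine (t r : ℝ) :
    HasDerivAt (fun x => exp (A t + B t * x)) (exp (A t + B t * r) * B t) r := by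
  simpa using (((hasDerivAt_id r).const_mul (B t)).const_add (A t)).exp

theorem partialQ_exp_mul (hg : DifferentiableAt ℝ (fun r => g (t, r)) q) :
    partialQ (fun p => exp (A p.1 + B p.1 * p.2) * g p) t q =
      exp (A t + B t * q) * (B t * g (t, q) + partialQ g t q) := by
  rw [partialQ, ((hasDerivAt_exp_affine t q).fun_mul hg.hasDerivAt).deriv, partialQ]
  ring

theorem partialQQ_exp_mul (hg : ∀ r, DifferentiableAt ℝ (fun r => g (t, r)) r)
    (hg' : DifferentiableAt ℝ (fun r => partialQ g t r) q) :
    partialQQ (fun p => exp (A p.1 + B p.1 * p.2) * g p) t q =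
      exp (A t + B t * q) *
        (B t ^ 2 * g (t, q) + 2 * B t * partialQ g t q + partialQQ g t q) := by
  have hsum : HasDerivAt (fun r => B t * g (t, r) + partialQ g t r)
      (B t * partialQ g t q + partialQQ g t q) q :=
    ((hg q).hasDerivAt.const_mul (B t)).add hg'.hasDerivAt
  rw [partialQQ]
  simp only [partialQ_exp_mul (hg _)]
  rw [((hasDerivAt_exp_affine t q).fun_mul hsum).deriv, partialQQ]
  ring

theorem partialT_exp_mul {A' B' : ℝ} (hA : HasDerivAt A A' t) (hB : HasDerivAt B B' t)
    (hg : DifferentiableAt ℝ (fun s => g (s, q)) t) :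
    partialT (fun p => exp (A p.1 + B p.1 * p.2) * g p) t q =
      exp (A t + B t * q) * ((A' + B' * q) * g (t, q) + partialT g t q) := by
  have hexp : HasDerivAt (fun s => exp (A s + B s * q)) (exp (A t + B t * q) * (A' + B' * q)) t :=
    (hA.add (hB.mul_const q)).exp
  rw [partialT, (hexp.fun_mul hg.hasDerivAt).deriv, partialT]
  ring

end Gauge

/-- from a `C²` solution `η` of the free backward heat equation
`θ² η_t = -(θ⁴/2) η_qq`, the function
`η^V(t,q) = exp(-λ²t³/(6θ²)) exp(λtq/θ²) η(t, q - λt²/2)`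
solves the backward heat equation with linear potential `V(q) = λq`. -/
theorem heat_linear_potential (θ : ℝ) (hθ : 0 < θ) (lam : ℝ) (η : ℝ × ℝ → ℝ)
    (hη : ContDiff ℝ 2 η)
    (hfree : ∀ t q : ℝ, θ ^ 2 * partialT η t q = -(θ ^ 4 / 2) * partialQQ η t q)
    (ηV : ℝ × ℝ → ℝ)
    (hηV : ∀ t q : ℝ,
      ηV (t, q) = Real.exp (-lam ^ 2 * t ^ 3 / (6 * θ ^ 2)) *
        Real.exp (lam * t * q / θ ^ 2) * η (t, q - lam * t ^ 2 / 2)) :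
    ∀ t q : ℝ,
      θ ^ 2 * partialT ηV t q = -(θ ^ 4 / 2) * partialQQ ηV t q + lam * q * ηV (t, q) := by
  intro t q
  set A : ℝ → ℝ := fun s => -lam ^ 2 * s ^ 3 / (6 * θ ^ 2) with hA_def
  set B : ℝ → ℝ := fun s => lam * s / θ ^ 2 with hB_def
  set h : ℝ → ℝ := fun s => lam * s ^ 2 / 2 with hh_def
  have hηd : Differentiable ℝ η := hη.differentiable two_ne_zero
  have hg : ContDiff ℝ 2 (fun p : ℝ × ℝ => η (p.1, p.2 - h p.1)) := hη.comp (by fun_prop)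
  have hgd := hg.differentiable two_ne_zero
  have hηV_eq : ηV = fun p => exp (A p.1 + B p.1 * p.2) * η (p.1, p.2 - h p.1) := by
    funext ⟨s, r⟩
    rw [hηV, ← exp_add]
    congr 3
    ring
  have hA : HasDerivAt A (-lam ^ 2 * (3 * t ^ 2) / (6 * θ ^ 2)) t := by
    rw [hA_def]
    simpa using ((hasDerivAt_pow 3 t).const_mul (-lam ^ 2)).div_const (6 * θ ^ 2)
  have hB : HasDerivAt B (lam / θ ^ 2) t := by
    rw [hB_def]
    simpa using ((hasDerivAt_id t).const_mul lam).div_const (θ ^ 2)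
  have hh : HasDerivAt h (lam * (2 * t) / 2) t := by
    rw [hh_def]
    simpa using ((hasDerivAt_pow 2 t).const_mul lam).div_const 2
  rw [hηV_eq, partialT_exp_mul hA hB (by fun_prop), partialQQ_exp_mul (fun _ => by fun_prop)
    (differentiable_partialQ hg t q), partialT_comp_shift (hηd _) hh,
    partialQ_comp_shift, partialQQ_comp_shift]
  have hfree_shifted := hfree t (q - h t)
  simp only [hB_def]
  field_simp
  linear_combination 12 * hfree_shifted
end

section
/- Let θ > 0 and ω ≠ 0 be real numbers. Suppose η : ℝ × ℝ → ℝ is twice continuously differentiable, everywhere strictly positive, and satisfies θ² ∂η/∂t (t,q) = -(θ⁴/2) ∂²η/∂q² (t,q) for all (t,q). Define the free drift B̃(t,q) = θ² (∂η/∂q (t,q))/η(t,q), let η^V(t,q) = cosh(ωt)^{-1/2} · exp( ω q² tanh(ωt)/(2θ²) ) · η( tanh(ωt)/ω , q/cosh(ωt) ), and define B̃_V(t,q) = θ² (∂η^V/∂q (t,q))/η^V(t,q). Then for all (t,q) ∈ ℝ × ℝ, B̃_V(t,q) = ω q tanh(ωt) + (1/cosh(ωt)) · B̃( tanh(ωt)/ω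 , q/cosh(ωt) ). -/
/-!
The drift is `θ²` times the logarithmic derivative in `q`, and the logarithmic derivative turns
the product defining `η^V(t, ·)` into a sum: the constant factor `cosh(ωt)^{-1/2}` contributes
nothing, the Gaussian factor `exp(a q²)` contributes `2 a q`, and the rescaled factor
`η(T, q / c)` contributes `(∂_q log η)(T, q / c) / c` by the chain rule.
-/

theorem partialQ_div_eq_logDeriv (f : ℝ × ℝ → ℝ) (t q : ℝ) :
    partialQ f t q / f (t, q) = logDeriv (fun r => f (t, r)) q :=
  rfl

theorem Real.logDeriv_exp_comp {h : ℝ → ℝ} {h' x : ℝ} (hh : HasDerivAt h h' x) :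
    logDeriv (fun y => Real.exp (h y)) x = h' := by
  rw [← Function.comp_def, logDeriv_comp Real.differentiable_exp.differentiableAt
    hh.differentiableAt, Real.logDeriv_exp, Pi.one_apply, one_mul, hh.deriv]

theorem logDeriv_comp_div_const {g : ℝ → ℝ} {x : ℝ} (c : ℝ) (hg : DifferentiableAt ℝ g (x / c)) :
    logDeriv (fun y => g (y / c)) x = logDeriv g (x / c) / c := by
  rw [← Function.comp_def g (· / c), logDeriv_comp (g := (· / c)) hg
    (differentiableAt_id.div_const c), deriv_div_const, deriv_id'', mul_one_div]

theorem logDeriv_const_mul_gaussian_mul_comp_div {g : ℝ → ℝ} {x : ℝ} (C a c : ℝ) (hC : C ≠ 0)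
    (hg₀ : g (x / c) ≠ 0) (hg : DifferentiableAt ℝ g (x / c)) :
    logDeriv (fun y => C * Real.exp (a * y ^ 2) * g (y / c)) x =
      2 * a * x + logDeriv g (x / c) / c := by
  have hsq : HasDerivAt (fun y : ℝ => a * y ^ 2) (2 * a * x) x :=
    ((hasDerivAt_pow 2 x).const_mul a).congr_deriv (by norm_num; ring)
  have hgc : DifferentiableAt ℝ (fun y => g (y / c)) x :=
    hg.comp x (differentiableAt_id.div_const c)
  simp only [mul_assoc C]
  rw [logDeriv_const_mul x C hC, logDeriv_mul (f := fun y => Real.exp (a * y ^ 2)) x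
    (Real.exp_pos _).ne' hg₀ hsq.differentiableAt.exp hgc, Real.logDeriv_exp_comp hsq,
    logDeriv_comp_div_const c hg]

theorem drift_quadratic_potential_general (θ ω : ℝ) (hθ : 0 < θ) (η : ℝ × ℝ → ℝ)
    (hη : ContDiff ℝ 2 η) (hpos : ∀ p : ℝ × ℝ, 0 < η p)
    (B : ℝ → ℝ → ℝ) (hB : ∀ t q : ℝ, B t q = θ ^ 2 * partialQ η t q / η (t, q))
    (ηV : ℝ × ℝ → ℝ)
    (hηV : ∀ t q : ℝ,
      ηV (t, q) = Real.cosh (ω * t) ^ (-(1 : ℝ) / 2) *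
        Real.exp (ω * q ^ 2 * Real.tanh (ω * t) / (2 * θ ^ 2)) *
        η (Real.tanh (ω * t) / ω, q / Real.cosh (ω * t)))
    (BV : ℝ → ℝ → ℝ) (hBV : ∀ t q : ℝ, BV t q = θ ^ 2 * partialQ ηV t q / ηV (t, q)) :
    ∀ t q : ℝ,
      BV t q = ω * q * Real.tanh (ω * t) +
        (1 / Real.cosh (ω * t)) * B (Real.tanh (ω * t) / ω) (q / Real.cosh (ω * t)) := by
  intro t q
  set c := Real.cosh (ω * t)
  set T := Real.tanh (ω * t) / ω
  have hslice : (fun r => ηV (t, r)) = fun r =>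
      c ^ (-(1 : ℝ) / 2) * Real.exp (ω * Real.tanh (ω * t) / (2 * θ ^ 2) * r ^ 2) *
        η (T, r / c) := by
    funext r
    rw [hηV]
    congr 3
    ring
  have hdiff : DifferentiableAt ℝ (fun r => η (T, r)) (q / c) :=
    ((hη.differentiable two_ne_zero) _).comp _ (by fun_prop)
  rw [hBV, hB, mul_div_assoc, mul_div_assoc, partialQ_div_eq_logDeriv,
    partialQ_div_eq_logDeriv, hslice,
    logDeriv_const_mul_gaussian_mul_comp_div _ _ _
      (Real.rpow_pos_of_pos (Real.cosh_pos _) _).ne' (hpos _).ne' hdiff]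
  field_simp

/-- for a strictly positive `C²` solution `η` of the free backward heat
equation with free drift `B̃ = θ² η_q/η`, the drift of
`η^V(t,q) = cosh(ωt)^{-1/2} exp(ωq² tanh(ωt)/(2θ²)) η(tanh(ωt)/ω, q/cosh(ωt))` is
`B̃_V(t,q) = ωq tanh(ωt) + (1/cosh(ωt)) B̃(tanh(ωt)/ω, q/cosh(ωt))`. -/
theorem drift_quadratic_potential (θ ω : ℝ) (hθ : 0 < θ) (hω : ω ≠ 0) (η : ℝ × ℝ → ℝ)
    (hη : ContDiff ℝ 2 η) (hpos : ∀ p : ℝ × ℝ, 0 < η p)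
    (hfree : ∀ t q : ℝ, θ ^ 2 * partialT η t q = -(θ ^ 4 / 2) * partialQQ η t q)
    (B : ℝ → ℝ → ℝ) (hB : ∀ t q : ℝ, B t q = θ ^ 2 * partialQ η t q / η (t, q))
    (ηV : ℝ × ℝ → ℝ)
    (hηV : ∀ t q : ℝ,
      ηV (t, q) = Real.cosh (ω * t) ^ (-(1 : ℝ) / 2) *
        Real.exp (ω * q ^ 2 * Real.tanh (ω * t) / (2 * θ ^ 2)) *
        η (Real.tanh (ω * t) / ω, q / Real.cosh (ω * t)))
    (BV : ℝ → ℝ → ℝ) (hBV : ∀ t q : ℝ, BV t q = θ ^ 2 * partialQ ηV t q / ηV (t, q)) :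
    ∀ t q : ℝ,
      BV t q = ω * q * Real.tanh (ω * t) +
        (1 / Real.cosh (ω * t)) * B (Real.tanh (ω * t) / ω) (q / Real.cosh (ω * t)) :=
  drift_quadratic_potential_general θ ω hθ η hη hpos B hB ηV hηV BV hBV
end

section
/- Let θ > 0, λ ∈ ℝ, and suppose η : ℝ × ℝ → ℝ is twice continuously differentiable, everywhere strictly positive, and satisfies the free backward heat equation θ² ∂η/∂t (t,q) = -(θ⁴/2) ∂²η/∂q² (t,q) for all (t,q). Let η^V(t,q) = exp(-λ² t³/(6θ²)) · exp(λ t q/θ²) · η(t, q - λ t²/2), let B̃(t,q) = θ² (∂η/∂q (t,q))/η(t,q) and B̃_V(t,q) = θ² (∂η^V/∂q (t,q))/η^V(t,q). If y : ℝ → ℝ is differentiable and z_V : ℝ → ℝ is defined by z_V(t) = y(t) + λ t²/2, then y satisfies the ordinary differential equation y'(t) = B̃(t, y(t)) for all t if and only if z_V satisfies z_V'(t) = B̃_V(t, z_V(t)) for all t. -/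
open Real

noncomputable def bernsteinDrift (θ : ℝ) (f : ℝ × ℝ → ℝ) (t q : ℝ) : ℝ :=
  θ ^ 2 * logDeriv (fun r => f (t, r)) q

lemma bernsteinDrift_eq (θ : ℝ) (f : ℝ × ℝ → ℝ) (t q : ℝ) :
    bernsteinDrift θ f t q = θ ^ 2 * partialQ f t q / f (t, q) :=
  (mul_div_assoc _ _ _).symm

lemma logDeriv_exp_mul_mul_comp_sub {f : ℝ → ℝ} {b c q : ℝ}
    (hf : DifferentiableAt ℝ f (q - c)) (hfq : f (q - c) ≠ 0) :
    logDeriv (fun r => exp (b * r) * f (r - c)) q = b + logDeriv f (q - c) := by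
  have hexp : logDeriv (fun r => exp (b * r)) q = b := by
    have h := ((hasDerivAt_id q).const_mul b).exp
    simp only [id] at h
    rw [logDeriv_apply, h.deriv, mul_one, mul_div_cancel_left₀ _ (exp_pos _).ne']
  have hshift : logDeriv (fun r => f (r - c)) q = logDeriv f (q - c) := by
    simp only [logDeriv_apply, deriv_comp_sub_const]
  rw [logDeriv_mul (f := fun r => exp (b * r)) (g := fun r => f (r - c)) q (exp_pos _).ne' hfq
    (by fun_prop) (hf.comp q (by fun_prop)), hexp, hshift]

lemma bernsteinDrift_of_gauge {θ a b c t q : ℝ} {η ηV : ℝ × ℝ → ℝ} (ha : a ≠ 0)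
    (hη : DifferentiableAt ℝ (fun r => η (t, r)) (q - c)) (hηq : η (t, q - c) ≠ 0)
    (hηV : ∀ r, ηV (t, r) = a * exp (b * r) * η (t, r - c)) :
    bernsteinDrift θ ηV t q = θ ^ 2 * b + bernsteinDrift θ η t (q - c) := by
  simp only [bernsteinDrift, hηV, mul_assoc a, logDeriv_const_mul q a ha,
    logDeriv_exp_mul_mul_comp_sub hη hηq, mul_add]

lemma forall_deriv_eq_iff_of_translate {y φ : ℝ → ℝ} {B BV : ℝ → ℝ → ℝ}
    (hy : Differentiable ℝ y) (hφ : Differentiable ℝ φ)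
    (hBV : ∀ t q, BV t q = deriv φ t + B t (q - φ t)) :
    (∀ t, deriv y t = B t (y t)) ↔ (∀ t, deriv (fun s => y s + φ s) t = BV t (y t + φ t)) := by
  refine forall_congr' fun t => ?_
  rw [deriv_fun_add (hy t) (hφ t), hBV, add_sub_cancel_right, add_comm, add_left_cancel_iff]

lemma deriv_mul_sq_div_two (lam t : ℝ) : deriv (fun s => lam * s ^ 2 / 2) t = lam * t := by
  have := ((hasDerivAt_pow 2 t).const_mul lam).div_const 2
  rw [this.deriv]
  ring

theorem bernstein_translation_linear_potential_general (θ : ℝ) (hθ : 0 < θ) (lam : ℝ)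
    (η : ℝ × ℝ → ℝ) (hη : ContDiff ℝ 2 η) (hpos : ∀ p : ℝ × ℝ, 0 < η p)
    (ηV : ℝ × ℝ → ℝ)
    (hηV : ∀ t q : ℝ,
      ηV (t, q) = Real.exp (-lam ^ 2 * t ^ 3 / (6 * θ ^ 2)) *
        Real.exp (lam * t * q / θ ^ 2) * η (t, q - lam * t ^ 2 / 2))
    (B : ℝ → ℝ → ℝ) (hB : ∀ t q : ℝ, B t q = θ ^ 2 * partialQ η t q / η (t, q))
    (BV : ℝ → ℝ → ℝ) (hBV : ∀ t q : ℝ, BV t q = θ ^ 2 * partialQ ηV t q / ηV (t, q))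
    (y : ℝ → ℝ) (hy : Differentiable ℝ y)
    (zV : ℝ → ℝ) (hzV : ∀ t : ℝ, zV t = y t + lam * t ^ 2 / 2) :
    (∀ t : ℝ, deriv y t = B t (y t)) ↔ (∀ t : ℝ, deriv zV t = BV t (zV t)) := by
  have hηdiff : Differentiable ℝ η := hη.differentiable (by norm_num)
  have hdrift : ∀ t q,
      BV t q = deriv (fun s => lam * s ^ 2 / 2) t + B t (q - lam * t ^ 2 / 2) := by
    intro t q
    have hgauge : ∀ r, ηV (t, r) = exp (-lam ^ 2 * t ^ 3 / (6 * θ ^ 2)) *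
        exp (lam * t / θ ^ 2 * r) * η (t, r - lam * t ^ 2 / 2) := fun r => by
      rw [hηV, div_mul_eq_mul_div]
    rw [hBV, hB, ← bernsteinDrift_eq, ← bernsteinDrift_eq,
      bernsteinDrift_of_gauge (exp_pos _).ne' (by fun_prop) (hpos _).ne' hgauge,
      mul_div_cancel₀ _ (pow_ne_zero 2 hθ.ne'), deriv_mul_sq_div_two]
  rw [show zV = fun s => y s + lam * s ^ 2 / 2 from funext hzV]
  exact forall_deriv_eq_iff_of_translate hy (by fun_prop) hdrift

/-- deterministic form of the translation `z_V = z + λt²/2`: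
with `η > 0` a `C²` solution of the free backward heat equation, free drift
`B̃ = θ² η_q/η`, `η^V(t,q) = exp(-λ²t³/(6θ²)) exp(λtq/θ²) η(t, q - λt²/2)` and
perturbed drift `B̃_V = θ² η^V_q/η^V`, a differentiable `y` solves
`y' (t) = B̃(t, y(t))` for all `t` iff `z_V(t) = y(t) + λt²/2` solves
`z_V'(t) = B̃_V(t, z_V(t))` for all `t`. -/
theorem bernstein_translation_linear_potential (θ : ℝ) (hθ : 0 < θ) (lam : ℝ)
    (η : ℝ × ℝ → ℝ) (hη : ContDiff ℝ 2 η) (hpos : ∀ p : ℝ × ℝ, 0 < η p)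
    (hfree : ∀ t q : ℝ, θ ^ 2 * partialT η t q = -(θ ^ 4 / 2) * partialQQ η t q)
    (ηV : ℝ × ℝ → ℝ)
    (hηV : ∀ t q : ℝ,
      ηV (t, q) = Real.exp (-lam ^ 2 * t ^ 3 / (6 * θ ^ 2)) *
        Real.exp (lam * t * q / θ ^ 2) * η (t, q - lam * t ^ 2 / 2))
    (B : ℝ → ℝ → ℝ) (hB : ∀ t q : ℝ, B t q = θ ^ 2 * partialQ η t q / η (t, q))
    (BV : ℝ → ℝ → ℝ) (hBV : ∀ t q : ℝ, BV t q = θ ^ 2 * partialQ ηV t q / ηV (t, q))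
    (y : ℝ → ℝ) (hy : Differentiable ℝ y)
    (zV : ℝ → ℝ) (hzV : ∀ t : ℝ, zV t = y t + lam * t ^ 2 / 2) :
    (∀ t : ℝ, deriv y t = B t (y t)) ↔ (∀ t : ℝ, deriv zV t = BV t (zV t)) :=
  bernstein_translation_linear_potential_general θ hθ lam η hη hpos ηV hηV B hB BV hBV y hy zV hzV
end
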